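/- If a, b, c are integers with 2 ≤ a ≤ b ≤ c and c ≥ a + b + 1, then m(a,b,c) > 0. -/
import Mathlib


/-- `mF a b c = F(a)² + F(b)² + F(c)² − 3·F(a)·F(b)·F(c)` as an integer. -/
def mF (a b c : ℕ) : ℤ :=
  (Nat.fib a : ℤ) ^ 2 + (Nat.fib b : ℤ) ^ 2 + (Nat.fib c : ℤ) ^ 2 -
    3 * (Nat.fib a : ℤ) * (Nat.fib b : ℤ) * (Nat.fib c : ℤ)

lemma three_fib_le (a : ℕ) (ha : 2 ≤ a) : 3 * Nat.fib a ≤ 2 * Nat.fib (a + 1) := by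
  obtain ⟨k, rfl⟩ : ∃ k, a = k + 2 := ⟨a - 2, by omega⟩
  have h1 : Nat.fib (k + 2) = Nat.fib k + Nat.fib (k + 1) := Nat.fib_add_two
  have h2 : Nat.fib (k + 3) = Nat.fib (k + 1) + Nat.fib (k + 2) := Nat.fib_add_two
  have h3 : Nat.fib k ≤ Nat.fib (k + 1) := Nat.fib_le_fib_succ
  have h4 : Nat.fib (k + 2 + 1) = Nat.fib (k + 3) := rfl
  omega

/-- If `2 ≤ a ≤ b ≤ c` and `c ≥ a + b + 1`, then `m(a,b,c) > 0`. -/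
theorem mF_pos_of_large_c (a b c : ℕ) (ha : 2 ≤ a) (hab : a ≤ b) (hbc : b ≤ c)
    (hc : a + b + 1 ≤ c) : 0 < mF a b c := by
  have hfa : 1 ≤ Nat.fib a := Nat.fib_pos.mpr (by omega)
  have hfb : 1 ≤ Nat.fib b := Nat.fib_pos.mpr (by omega)
  have h1 := three_fib_le a ha
  have h2 := three_fib_le b (le_trans ha hab)
  have hadd := Nat.fib_add a b
  have hmono : Nat.fib (a + b + 1) ≤ Nat.fib c := Nat.fib_mono hc
  -- 9 fa fb ≤ 4 f(a+1) f(b+1)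
  have h9 : 9 * (Nat.fib a * Nat.fib b) ≤ 4 * (Nat.fib (a + 1) * Nat.fib (b + 1)) := by
    calc 9 * (Nat.fib a * Nat.fib b) = (3 * Nat.fib a) * (3 * Nat.fib b) := by ring
    _ ≤ (2 * Nat.fib (a + 1)) * (2 * Nat.fib (b + 1)) := Nat.mul_le_mul h1 h2
    _ = 4 * (Nat.fib (a + 1) * Nat.fib (b + 1)) := by ring
  have hgt : 3 * (Nat.fib a * Nat.fib b) < Nat.fib c := by
    have : 13 * (Nat.fib a * Nat.fib b) ≤ 4 * Nat.fib (a + b + 1) := by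
      rw [hadd]; omega
    nlinarith [Nat.mul_le_mul_left 1 hfb]
  have hfc : 1 ≤ Nat.fib c := le_trans hfb (Nat.fib_mono hbc)
  have hgtz : 3 * ((Nat.fib a : ℤ) * (Nat.fib b : ℤ)) < (Nat.fib c : ℤ) := by
    exact_mod_cast hgt
  have hfaz : (1 : ℤ) ≤ (Nat.fib a : ℤ) := by exact_mod_cast hfa
  have hfbz : (1 : ℤ) ≤ (Nat.fib b : ℤ) := by exact_mod_cast hfb
  have hfcz : (1 : ℤ) ≤ (Nat.fib c : ℤ) := by exact_mod_cast hfc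
  unfold mF
  nlinarith [sq_nonneg ((Nat.fib a : ℤ) - (Nat.fib b : ℤ))]
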